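/- arXiv:2405.10887 — 3 statements merged into one kernel-verified Lean document; each statement's English description precedes it below -/
import Mathlib

section
/- For all odd integers n, m ≥ 3, every graph homomorphism f from the wheel W_n to the wheel W_m is surjective on vertices and surjective on edges (i.e., every edge of W_m is the image of an edge of W_n). -/
open Sum

/-- The wheel graph `W n`: an `n`-cycle on `Fin n` together with an apex vertex
(the `Sum.inr` vertex) adjacent to every cycle vertex. -/
def wheel (n : ℕ) : SimpleGraph (Fin n ⊕ Unit) :=
  SimpleGraph.fromRel (fun u v =>
    match u, v with
    | Sum.inl i, Sum.inl j => ((i : ℕ) + 1) % n = (j : ℕ)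
    | Sum.inl _, Sum.inr _ => True
    | _, _ => False)

lemma apex_adj {n : ℕ} (i : Fin n) : (wheel n).Adj (inl i) (inr ()) := by
  simp [wheel, SimpleGraph.fromRel_adj]

lemma succ_mod_ne {n k : ℕ} (hn : 2 ≤ n) : k % n ≠ (k+1) % n := by
  have h1 : k % n < n := Nat.mod_lt _ (by omega)
  rcases Nat.lt_or_ge (k % n + 1) n with h | h
  · rw [← Nat.mod_add_mod, Nat.mod_eq_of_lt h]; omega
  · have h2 : k % n = n - 1 := by omega
    rw [← Nat.mod_add_mod, h2, show n - 1 + 1 = n from by omega, Nat.mod_self]; omega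

lemma cycle_adj {n : ℕ} (hn : 3 ≤ n) (k : ℕ) :
    (wheel n).Adj (inl ⟨k % n, Nat.mod_lt _ (by omega)⟩)
      (inl ⟨(k+1) % n, Nat.mod_lt _ (by omega)⟩) := by
  simp only [wheel, SimpleGraph.fromRel_adj]
  refine ⟨?_, Or.inl ?_⟩
  · simp only [ne_eq, Sum.inl.injEq, Fin.mk.injEq]
    exact succ_mod_ne (by omega)
  · exact Nat.mod_add_mod k n 1

lemma fin3_unique (a x y z : Fin 3) (h1 : x ≠ a) (h2 : y ≠ a) (h3 : z ≠ a)
    (h4 : x ≠ y) (h5 : y ≠ z) : z = x := by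
  have ha := a.isLt; have hx := x.isLt; have hy := y.isLt; have hz := z.isLt
  simp only [Ne, Fin.ext_iff] at h1 h2 h3 h4 h5 ⊢
  omega

lemma no3col {n : ℕ} (hn : 3 ≤ n) (hodd : Odd n)
    (d : Fin n ⊕ Unit → Fin 3)
    (hd : ∀ x y, (wheel n).Adj x y → d x ≠ d y) : False := by
  have hpos : 0 < n := by omega
  set D : ℕ → Fin 3 := fun k => d (inl ⟨k % n, Nat.mod_lt _ (by omega)⟩) with hD
  have hDs : ∀ k, D k ≠ D (k+1) := fun k => hd _ _ (cycle_adj hn k)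
  have hDa : ∀ k, D k ≠ d (inr ()) := fun k => hd _ _ (apex_adj _)
  have key : ∀ j : ℕ, D (2*j) = D 0 := by
    intro j
    induction j with
    | zero => rfl
    | succ j ih =>
      have h3 : D (2*j+2) = D (2*j) :=
        fin3_unique (d (inr ())) (D (2*j)) (D (2*j+1)) (D (2*j+2))
          (hDa _) (hDa _) (hDa _) (hDs _) (hDs _)
      rw [show 2*(j+1) = 2*j+2 from by ring, h3, ih]
  obtain ⟨j, hj⟩ := hodd
  have h1 : D (n-1) = D 0 := by rw [show n - 1 = 2*j from by omega]; exact key j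
  have h2 : D n = D 0 := by
    simp only [hD]
    congr 1
    exact congrArg inl (Fin.ext (by simp))
  have := hDs (n-1)
  rw [show n - 1 + 1 = n from by omega, h1, h2] at this
  exact this rfl

/-- coloring proper except on the apex edge `(inl b, inr)` -/
def wcolA (m b : ℕ) : Fin m ⊕ Unit → Fin 3
  | inr _ => 2
  | inl j =>
    if (if b ≤ j.val then j.val - b else j.val + m - b) = 0 then 2
    else if (if b ≤ j.val then j.val - b else j.val + m - b) % 2 = 0 then 0 else 1

/-- coloring proper except on the cycle edge ending at `inl b` -/
def wcolB (m b : ℕ) : Fin m ⊕ Unit → Fin 3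
  | inr _ => 2
  | inl j =>
    if (if b ≤ j.val then j.val - b else j.val + m - b) % 2 = 0 then 0 else 1

lemma succ_facts {m : ℕ} (i j : Fin m) (h : ((i : ℕ) + 1) % m = (j : ℕ)) :
    ((i : ℕ) + 1 < m ∧ (j : ℕ) = (i : ℕ) + 1) ∨ ((i : ℕ) + 1 = m ∧ (j : ℕ) = 0) := by
  have hi := i.isLt
  rcases Nat.lt_or_ge ((i : ℕ) + 1) m with h' | h'
  · left; exact ⟨h', by rw [← h, Nat.mod_eq_of_lt h']⟩
  · right
    have : (i : ℕ) + 1 = m := by omega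
    exact ⟨this, by rw [← h, this, Nat.mod_self]⟩

lemma wcolA_proper {m : ℕ} (hm : 3 ≤ m) (hmodd : Odd m) (k : Fin m) :
    ∀ p q, (wheel m).Adj p q →
      ¬(p = inl k ∧ q = inr ()) → ¬(p = inr () ∧ q = inl k) →
      wcolA m k.val p ≠ wcolA m k.val q := by
  have hm2 : m % 2 = 1 := Nat.odd_iff.mp hmodd
  have hk := k.isLt
  rintro (i | u) (j | v) hadj hne1 hne2
  · -- cycle edge
    simp only [wheel, SimpleGraph.fromRel_adj] at hadj
    obtain ⟨hne, hrel | hrel⟩ := hadj <;>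
    · rcases succ_facts _ _ hrel with ⟨h1, h2⟩ | ⟨h1, h2⟩ <;>
      · have hi := i.isLt; have hj := j.isLt
        simp only [wcolA]
        split_ifs <;> first | decide | (exfalso; omega)
  · -- apex edge (inl i, inr v)
    have hik : (i : ℕ) ≠ k.val := by
      intro h
      exact hne1 ⟨by rw [Sum.inl.injEq]; exact Fin.ext h, rfl⟩
    have hi := i.isLt
    simp only [wcolA]
    split_ifs <;> first | decide | (exfalso; omega)
  · have hjk : (j : ℕ) ≠ k.val := by
      intro h
      exact hne2 ⟨rfl, by rw [Sum.inl.injEq]; exact Fin.ext h⟩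
    have hj := j.isLt
    simp only [wcolA]
    split_ifs <;> first | decide | (exfalso; omega)
  · simp only [wheel, SimpleGraph.fromRel_adj] at hadj
    obtain ⟨-, h | h⟩ := hadj <;> exact h.elim

lemma wcolB_proper {m : ℕ} (hm : 3 ≤ m) (hmodd : Odd m) (k k' : Fin m)
    (hk' : ((k : ℕ) + 1) % m = (k' : ℕ)) :
    ∀ p q, (wheel m).Adj p q →
      ¬(p = inl k ∧ q = inl k') → ¬(p = inl k' ∧ q = inl k) →
      wcolB m k'.val p ≠ wcolB m k'.val q := by
  have hm2 : m % 2 = 1 := Nat.odd_iff.mp hmodd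
  have hk := k.isLt; have hk2 := k'.isLt
  have hkk := succ_facts _ _ hk'
  rintro (i | u) (j | v) hadj hne1 hne2
  · simp only [wheel, SimpleGraph.fromRel_adj] at hadj
    obtain ⟨hne, hrel | hrel⟩ := hadj
    · have hne1' : ¬((i : ℕ) = (k : ℕ) ∧ (j : ℕ) = (k' : ℕ)) := by
        rintro ⟨h1, h2⟩
        exact hne1 ⟨by rw [Sum.inl.injEq]; exact Fin.ext h1,
                    by rw [Sum.inl.injEq]; exact Fin.ext h2⟩
      rcases succ_facts _ _ hrel with ⟨h1, h2⟩ | ⟨h1, h2⟩ <;>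
      · have hi := i.isLt; have hj := j.isLt
        simp only [wcolB]
        split_ifs <;> first | decide | (exfalso; omega)
    · have hne2' : ¬((j : ℕ) = (k : ℕ) ∧ (i : ℕ) = (k' : ℕ)) := by
        rintro ⟨h1, h2⟩
        exact hne2 ⟨by rw [Sum.inl.injEq]; exact Fin.ext h2,
                    by rw [Sum.inl.injEq]; exact Fin.ext h1⟩
      rcases succ_facts _ _ hrel with ⟨h1, h2⟩ | ⟨h1, h2⟩ <;>
      · have hi := i.isLt; have hj := j.isLt
        simp only [wcolB]
        split_ifs <;> first | decide | (exfalso; omega)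
  · have hi := i.isLt
    simp only [wcolB]
    split_ifs <;> decide
  · have hj := j.isLt
    simp only [wcolB]
    split_ifs <;> decide
  · simp only [wheel, SimpleGraph.fromRel_adj] at hadj
    obtain ⟨-, h | h⟩ := hadj <;> exact h.elim

/-- For odd `n, m ≥ 3`, every graph homomorphism from `W n` to `W m` is full, i.e.
surjective on vertices and every edge of `W m` is the image of an edge of `W n`. -/
theorem wheel_hom_full (n m : ℕ) (hn : 3 ≤ n) (hodd : Odd n) (hm : 3 ≤ m) (hmodd : Odd m)
    (f : wheel n →g wheel m) :
    Function.Surjective f ∧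
      ∀ u v, (wheel m).Adj u v → ∃ x y, (wheel n).Adj x y ∧ f x = u ∧ f y = v := by
  constructor
  · -- vertex surjectivity
    intro u
    by_contra hu
    push_neg at hu
    rcases u with k | u'
    · exact no3col hn hodd (fun p => wcolA m k.val (f p)) (fun x y hxy =>
        wcolA_proper hm hmodd k _ _ (f.map_adj hxy)
          (fun ⟨h1, _⟩ => hu x h1) (fun ⟨_, h2⟩ => hu y h2))
    · cases u'
      exact no3col hn hodd (fun p => wcolA m 0 (f p)) (fun x y hxy =>
        wcolA_proper hm hmodd ⟨0, by omega⟩ _ _ (f.map_adj hxy)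
          (fun ⟨_, h2⟩ => hu y h2) (fun ⟨h1, _⟩ => hu x h1))
  · -- edge surjectivity
    intro u v huv
    by_contra hcon
    push_neg at hcon
    have hc : ∀ x y, (wheel n).Adj x y → ¬(f x = u ∧ f y = v) := by
      rintro x y hxy ⟨h1, h2⟩
      exact hcon x y hxy h1 h2
    have hc' : ∀ x y, (wheel n).Adj x y → ¬(f x = v ∧ f y = u) := by
      rintro x y hxy ⟨h1, h2⟩
      exact hcon y x hxy.symm h2 h1
    have hadj := huv
    simp only [wheel, SimpleGraph.fromRel_adj] at hadj
    obtain ⟨hne, hrel⟩ := hadj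
    rcases u with i | u' <;> rcases v with j | v'
    · -- both cycle vertices
      rcases hrel with h | h
      · exact no3col hn hodd (fun p => wcolB m j.val (f p)) (fun x y hxy =>
          wcolB_proper hm hmodd i j h _ _ (f.map_adj hxy)
            (hc x y hxy) (hc' x y hxy))
      · exact no3col hn hodd (fun p => wcolB m i.val (f p)) (fun x y hxy =>
          wcolB_proper hm hmodd j i h _ _ (f.map_adj hxy)
            (hc' x y hxy) (hc x y hxy))
    · cases v'
      exact no3col hn hodd (fun p => wcolA m i.val (f p)) (fun x y hxy =>
        wcolA_proper hm hmodd i _ _ (f.map_adj hxy)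
          (hc x y hxy) (hc' x y hxy))
    · cases u'
      exact no3col hn hodd (fun p => wcolA m j.val (f p)) (fun x y hxy =>
        wcolA_proper hm hmodd j _ _ (f.map_adj hxy)
          (hc' x y hxy) (hc x y hxy))
    · rcases hrel with h | h <;> exact h.elim
end

section
/- A finite graph G satisfies the first-order sentence φ (asserting: there exists a vertex x of degree at least 1 such that every vertex z ≠ x at distance at most 2 from x is adjacent to x and has exactly two neighbours other than x) if and only if some connected component of G is a bouquet of cycles, i.e., G contains a bouquet of cycles as a free induced subgraph. -/
/-- The bouquet of cycles of type `(len 0, …, len (k-1))`: the disjoint union of cycles of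
lengths `len i` (vertices `some ⟨i, x⟩`, with `x : ZMod (len i)`) together with an apex
vertex `none` adjacent to every cycle vertex. -/
def bouquet (k : ℕ) (len : Fin k → ℕ) :
    SimpleGraph (Option (Σ i : Fin k, ZMod (len i))) :=
  SimpleGraph.fromRel (fun u v =>
    match u, v with
    | none, some _ => True
    | some x, some y => ∃ h : x.1 = y.1, (h ▸ x.2) + 1 = y.2
    | _, _ => False)

/-- The first-order condition `φ`: there is a vertex `x` of degree at least `1` such that
every vertex `z ≠ x` at distance at most `2` from `x` is adjacent to `x` and has exactly
two neighbours other than `x`. -/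
def phiCond {V : Type} (G : SimpleGraph V) : Prop :=
  ∃ x y, G.Adj x y ∧ ∀ z, z ≠ x → (G.Adj x z ∨ ∃ w, G.Adj x w ∧ G.Adj w z) →
    G.Adj x z ∧ ∃ u v, u ≠ v ∧ u ≠ x ∧ v ≠ x ∧ G.Adj z u ∧ G.Adj z v ∧
      ∀ w, G.Adj z w → w = u ∨ w = v ∨ w = x

/-!
If `x` witnesses `φ`, every vertex within distance two of `x` is a neighbour of `x`, so the
closed neighbourhood of `x` is a union of components, and every neighbour of `x` has exactly two
neighbours inside `N(x)`. A finite 2-regular graph is a disjoint union of cycles of length at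
least three: following a dart and always leaving a vertex by the edge it was not entered by runs
once around a component. Hence the closed neighbourhood of `x` is a free bouquet with apex `x`.
Conversely, the apex of a free bouquet witnesses `φ`, since `φ` only inspects vertices within
distance three of `x`, and these stay in the bouquet.
-/

open Function

namespace Function

theorem iterate_val_add_one {α : Type*} {f : α → α} {x : α} (hx : 0 < minimalPeriod f x)
    (m : ZMod (minimalPeriod f x)) : f^[(m + 1).val] x = f (f^[m.val] x) := by
  have : NeZero (minimalPeriod f x) := ⟨hx.ne'⟩
  rw [ZMod.val_add, ZMod.val_one_eq_one_mod, Nat.add_mod_mod, iterate_mod_minimalPeriod_eq,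
    iterate_succ_apply']

theorem injective_iterate_val {α : Type*} {f : α → α} {x : α} (hx : 0 < minimalPeriod f x) :
    Injective fun m : ZMod (minimalPeriod f x) => f^[m.val] x := by
  have : NeZero (minimalPeriod f x) := ⟨hx.ne'⟩
  exact fun m m' hm => ZMod.val_injective _ <|
    iterate_injOn_Iio_minimalPeriod (ZMod.val_lt m) (ZMod.val_lt m') hm

end Function

namespace SimpleGraph

def cone {α : Type*} (H : SimpleGraph α) : SimpleGraph (Option α) where
  Adj
    | none, none => False
    | none, some _ => True
    | some _, none => True
    | some a, some b => H.Adj a b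
  symm.symm := by rintro (_ | a) (_ | b) hab <;> first | exact hab | exact hab.symm
  loopless.irrefl := by rintro (_ | a) h; exacts [h, H.loopless.irrefl a h]

def Iso.cone {α β : Type*} {H : SimpleGraph α} {H' : SimpleGraph β} (e : H ≃g H') :
    H.cone ≃g H'.cone where
  toEquiv := Equiv.optionCongr e.toEquiv
  map_rel_iff' := by rintro (_ | a) (_ | b) <;> simp [SimpleGraph.cone, e.map_adj_iff]

theorem nonempty_iso_cone_induce_neighborSet {V : Type*} (G : SimpleGraph V) (x : V) :
    Nonempty ((G.induce (G.neighborSet x)).cone ≃g G.induce (insert x (G.neighborSet x))) := by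
  classical
  refine ⟨⟨{
    toFun := fun o => o.elim ⟨x, Set.mem_insert _ _⟩ fun v => ⟨v, Set.mem_insert_of_mem _ v.2⟩
    invFun := fun v => if hv : v.1 = x then none
      else some ⟨v, (Set.mem_insert_iff.1 v.2).resolve_left hv⟩
    left_inv := by
      rintro (_ | ⟨v, hv⟩)
      · simp
      · simp [(G.ne_of_adj hv).symm]
    right_inv := by rintro ⟨v, hv⟩; by_cases hvx : v = x <;> simp [hvx] }, ?_⟩⟩
  rintro (_ | ⟨a, ha⟩) (_ | ⟨b, hb⟩)
  · simp [cone]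
  · simpa [cone] using hb
  · simpa [cone] using ha.symm
  · simp [cone]

def cycleUnion {ι : Type*} (len : ι → ℕ) : SimpleGraph (Σ i, ZMod (len i)) :=
  fromRel fun p q => (⟨p.1, p.2 + 1⟩ : Σ i, ZMod (len i)) = q

theorem cycleUnion_adj_iff {ι : Type*} {len : ι → ℕ} {i : ι} (hi : len i ≠ 1)
    (m : ZMod (len i)) (q : Σ i, ZMod (len i)) :
    (cycleUnion len).Adj ⟨i, m⟩ q ↔ q = ⟨i, m + 1⟩ ∨ q = ⟨i, m - 1⟩ := by
  have h1 : (1 : ZMod (len i)) ≠ 0 := fun h => hi (ZMod.one_eq_zero_iff.1 h)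
  obtain ⟨j, n⟩ := q
  by_cases hji : j = i
  · subst hji
    simp only [cycleUnion, fromRel_adj, ne_eq, Sigma.mk.inj_iff, heq_eq_eq, true_and]
    constructor
    · rintro ⟨-, rfl | rfl⟩
      exacts [Or.inl rfl, Or.inr (add_sub_cancel_right _ _).symm]
    · rintro (rfl | rfl)
      · exact ⟨fun h => h1 (by simpa using h.symm), Or.inl rfl⟩
      · exact ⟨fun h => h1 (by linear_combination h), Or.inr (sub_add_cancel _ _)⟩
  · simp [cycleUnion, hji, Ne.symm hji]

theorem ncard_neighborSet_cycleUnion {ι : Type*} {len : ι → ℕ} (hlen : ∀ i, 3 ≤ len i)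
    (p : Σ i, ZMod (len i)) : ((cycleUnion len).neighborSet p).ncard = 2 := by
  obtain ⟨i, m⟩ := p
  have h2 : ((2 : ℕ) : ZMod (len i)) ≠ 0 := by
    rw [Ne, ZMod.natCast_eq_zero_iff]
    exact fun h => by linarith [Nat.le_of_dvd two_pos h, hlen i]
  rw [Set.ncard_eq_two]
  refine ⟨⟨i, m + 1⟩, ⟨i, m - 1⟩, fun h => h2 ?_, ?_⟩
  · push_cast
    linear_combination sigma_mk_injective h
  · ext q; simp [cycleUnion_adj_iff (by linarith [hlen i] : len i ≠ 1)]

theorem bouquet_eq_cone (k : ℕ) (len : Fin k → ℕ) : bouquet k len = (cycleUnion len).cone := by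
  ext (_ | ⟨i, m⟩) (_ | ⟨j, n⟩)
  iterate 3 simp [bouquet, cone]
  rcases eq_or_ne i j with rfl | hij
  · simp [bouquet, cone, cycleUnion]
  · simp [bouquet, cone, cycleUnion, hij, hij.symm]

variable {W : Type*} {G : SimpleGraph W}

theorem exists_adj_ne (h : ∀ v, (G.neighborSet v).ncard = 2) (v u : W) :
    ∃ w, G.Adj v w ∧ w ≠ u := by
  obtain ⟨a, b, hab, hv⟩ := Set.ncard_eq_two.1 (h v)
  have ha : G.Adj v a := by simp [← mem_neighborSet, hv]
  have hb : G.Adj v b := by simp [← mem_neighborSet, hv]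
  by_cases hau : a = u
  · exact ⟨b, hb, hau ▸ hab.symm⟩
  · exact ⟨a, ha, hau⟩

theorem eq_or_eq_of_adj (h : ∀ v, (G.neighborSet v).ncard = 2) {v u w w' : W} (huw : u ≠ w)
    (hu : G.Adj v u) (hw : G.Adj v w) (hw' : G.Adj v w') : w' = u ∨ w' = w := by
  obtain ⟨a, b, -, hv⟩ := Set.ncard_eq_two.1 (h v)
  simp only [← mem_neighborSet, hv, Set.mem_insert_iff, Set.mem_singleton_iff] at hu hw hw'
  grind

section TwoRegular

variable (h : ∀ v, (G.neighborSet v).ncard = 2)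

noncomputable def dartSucc (d : G.Dart) : G.Dart :=
  ⟨(d.snd, (exists_adj_ne h d.snd d.fst).choose), (exists_adj_ne h d.snd d.fst).choose_spec.1⟩

@[simp]
theorem dartSucc_fst (d : G.Dart) : (dartSucc h d).fst = d.snd := rfl

theorem dartSucc_snd_ne (d : G.Dart) : (dartSucc h d).snd ≠ d.fst :=
  (exists_adj_ne h d.snd d.fst).choose_spec.2

theorem dartSucc_ne_symm (d : G.Dart) : dartSucc h d ≠ d.symm :=
  fun hd => dartSucc_snd_ne h d (congrArg (·.snd) hd)

theorem eq_dartSucc {d e : G.Dart} (he : e.fst = d.snd) (hne : e.snd ≠ d.fst) :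
    e = dartSucc h d :=
  Dart.ext _ _ (Prod.ext he <|
    (eq_or_eq_of_adj h (dartSucc_snd_ne h d).symm d.adj.symm (dartSucc h d).adj
      (he ▸ e.adj)).resolve_left hne)

theorem adj_snd_iff (d : G.Dart) (w : W) :
    G.Adj d.snd w ↔ w = (dartSucc h d).snd ∨ w = d.fst := by
  refine ⟨eq_or_eq_of_adj h (dartSucc_snd_ne h d) (dartSucc h d).adj d.adj.symm, ?_⟩
  rintro (rfl | rfl)
  exacts [(dartSucc h d).adj, d.adj.symm]

theorem dartSucc_symm_dartSucc (d : G.Dart) : dartSucc h (dartSucc h d).symm = d.symm :=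
  (eq_dartSucc h (d := (dartSucc h d).symm) (e := d.symm) rfl (dartSucc_snd_ne h d).symm).symm

theorem dartSucc_injective : Injective (dartSucc h) := fun a b hab =>
  Dart.symm_involutive.injective <|
    (dartSucc_symm_dartSucc h a).symm.trans (hab ▸ dartSucc_symm_dartSucc h b)

theorem iterate_dartSucc_symm (m : ℕ) (d : G.Dart) :
    (dartSucc h)^[m] ((dartSucc h)^[m] d).symm = d.symm := by
  induction m generalizing d with
  | zero => rfl
  | succ m ih =>
    rw [iterate_succ_apply' _ _ d, iterate_succ_apply, dartSucc_symm_dartSucc, ih]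

/-- Reversal conjugates `dartSucc` to its inverse, so the midpoint of a path from `d` to
`d.symm` would be a dart equal to its own reverse or to the reverse of its successor. -/
theorem iterate_dartSucc_ne_symm (n : ℕ) (d : G.Dart) : (dartSucc h)^[n] d ≠ d.symm := by
  intro hn
  have hinj := (dartSucc_injective h).iterate
  obtain ⟨m, rfl | rfl⟩ := n.even_or_odd'
  · refine ((dartSucc h)^[m] d).symm_ne (hinj m ?_).symm
    rw [← iterate_add_apply, ← two_mul, hn, iterate_dartSucc_symm]
  · refine dartSucc_ne_symm h ((dartSucc h)^[m] d) (hinj m ?_)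
    rw [← iterate_succ_apply' (dartSucc h) m, ← iterate_add_apply,
      show m + (m + 1) = 2 * m + 1 by omega, hn, iterate_dartSucc_symm]

/-- The darts leaving the vertex `e.fst` are `e` and `dartSucc e.symm`; for `e` in the orbit of
`d`, the latter would put `d.symm` in that orbit. -/
theorem iterate_dartSucc_eq_of_fst_eq {i j : ℕ} {d : G.Dart}
    (hij : ((dartSucc h)^[i] d).fst = ((dartSucc h)^[j] d).fst) :
    (dartSucc h)^[i] d = (dartSucc h)^[j] d := by
  by_contra hne
  have hj : (dartSucc h)^[j] d = dartSucc h ((dartSucc h)^[i] d).symm :=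
    eq_dartSucc h hij.symm fun hs => hne (Dart.ext _ _ (Prod.ext hij hs.symm))
  have hij' : (dartSucc h)^[i + j] d = dartSucc h d.symm := by
    rw [iterate_add_apply, hj, ← iterate_succ_apply, iterate_succ_apply', iterate_dartSucc_symm]
  obtain ⟨n, hn⟩ : ∃ n, i + j = n + 1 := Nat.exists_eq_add_one.2 (by grind)
  rw [hn, iterate_succ_apply'] at hij'
  exact iterate_dartSucc_ne_symm h n d (dartSucc_injective h hij')

theorem reachable_iterate_dartSucc_fst (d : G.Dart) (n : ℕ) :
    G.Reachable d.fst ((dartSucc h)^[n] d).fst := by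
  induction n with
  | zero => rfl
  | succ n ih => rw [iterate_succ_apply']; exact ih.trans ((dartSucc h)^[n] d).adj.reachable

section Finite

variable [Finite W]

theorem minimalPeriod_dartSucc_pos (d : G.Dart) : 0 < minimalPeriod (dartSucc h) d :=
  have : Finite G.Dart := .of_injective _ fun _ _ => Dart.ext _ _
  minimalPeriod_pos_of_mem_periodicPts ((dartSucc_injective h).mem_periodicPts d)

theorem three_le_minimalPeriod_dartSucc (d : G.Dart) : 3 ≤ minimalPeriod (dartSucc h) d := by
  have hpos := minimalPeriod_dartSucc_pos h d
  have hper := iterate_minimalPeriod (f := dartSucc h) (x := d)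
  by_contra! hlt
  interval_cases minimalPeriod (dartSucc h) d
  · exact d.adj.ne (congrArg (·.fst) hper).symm
  · exact dartSucc_snd_ne h d (congrArg (·.fst) hper)

noncomputable def cycleMap (d : G.Dart) (m : ZMod (minimalPeriod (dartSucc h) d)) : W :=
  ((dartSucc h)^[m.val] d).fst

theorem cycleMap_injective (d : G.Dart) : Injective (cycleMap h d) := fun _ _ hm =>
  injective_iterate_val (minimalPeriod_dartSucc_pos h d) (iterate_dartSucc_eq_of_fst_eq h hm)

theorem cycleMap_add_one (d : G.Dart) (m : ZMod (minimalPeriod (dartSucc h) d)) :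
    cycleMap h d (m + 1) = ((dartSucc h)^[m.val] d).snd := by
  rw [cycleMap, iterate_val_add_one (minimalPeriod_dartSucc_pos h d), dartSucc_fst]

theorem adj_cycleMap_iff (d : G.Dart) (m : ZMod (minimalPeriod (dartSucc h) d)) (w : W) :
    G.Adj (cycleMap h d m) w ↔ w = cycleMap h d (m + 1) ∨ w = cycleMap h d (m - 1) := by
  obtain ⟨n, rfl⟩ : ∃ n, m = n + 1 := ⟨m - 1, (sub_add_cancel m 1).symm⟩
  rw [add_sub_cancel_right, cycleMap_add_one, cycleMap_add_one,
    iterate_val_add_one (minimalPeriod_dartSucc_pos h d)]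
  exact adj_snd_iff h _ w

theorem mem_range_cycleMap_iff (d : G.Dart) (v : W) :
    v ∈ Set.range (cycleMap h d) ↔ G.Reachable d.fst v := by
  refine ⟨fun ⟨m, hm⟩ => hm ▸ reachable_iterate_dartSucc_fst h d m.val, fun hv => ?_⟩
  have : NeZero (minimalPeriod (dartSucc h) d) := ⟨(minimalPeriod_dartSucc_pos h d).ne'⟩
  rw [reachable_iff_reflTransGen] at hv
  induction hv with
  | refl => exact ⟨0, by simp [cycleMap]⟩
  | tail _ hadj ih =>
    obtain ⟨m, rfl⟩ := ih
    rcases (adj_cycleMap_iff h d m _).1 hadj with rfl | rfl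
    exacts [⟨_, rfl⟩, ⟨_, rfl⟩]

end Finite

end TwoRegular

theorem exists_iso_cycleUnion [Finite W] (h : ∀ v, (G.neighborSet v).ncard = 2) :
    ∃ (k : ℕ) (len : Fin k → ℕ), (∀ i, 3 ≤ len i) ∧ Nonempty (cycleUnion len ≃g G) := by
  have : Fintype G.ConnectedComponent := .ofFinite _
  let φ := (Fintype.equivFin G.ConnectedComponent).symm
  have hdart (c : G.ConnectedComponent) : ∃ d : G.Dart, G.connectedComponentMk d.fst = c :=
    c.ind fun v => ⟨⟨(v, _), (exists_adj_ne h v v).choose_spec.1⟩, rfl⟩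
  choose d hd using hdart
  let len i := minimalPeriod (dartSucc h) (d (φ i))
  let F : (Σ i, ZMod (len i)) → W := fun p => cycleMap h (d (φ p.1)) p.2
  have hlen i : 3 ≤ len i := three_le_minimalPeriod_dartSucc h _
  have hF p : G.connectedComponentMk (F p) = φ p.1 := by
    rw [← hd (φ p.1), ConnectedComponent.eq]
    exact ((mem_range_cycleMap_iff h _ _).1 ⟨_, rfl⟩).symm
  have hinj : Injective F := by
    rintro ⟨i, m⟩ ⟨j, n⟩ hmn
    obtain rfl : i = j := φ.injective <| by rw [← hF ⟨i, m⟩, ← hF ⟨j, n⟩, hmn]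
    exact congrArg _ (cycleMap_injective h _ hmn)
  have hsurj : Surjective F := fun v => by
    obtain ⟨i, hi⟩ := φ.surjective (G.connectedComponentMk v)
    obtain ⟨m, hm⟩ := (mem_range_cycleMap_iff h (d (φ i)) v).2 <| by
      rw [← ConnectedComponent.eq, hd, hi]
    exact ⟨⟨i, m⟩, hm⟩
  let e := Equiv.ofBijective F ⟨hinj, hsurj⟩
  refine ⟨_, len, hlen, ⟨⟨e, fun {p q} => ?_⟩⟩⟩
  obtain ⟨i, m⟩ := p
  rw [cycleUnion_adj_iff (by linarith [hlen i]), ← e.apply_eq_iff_eq (y := ⟨i, m + 1⟩),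
    ← e.apply_eq_iff_eq (y := ⟨i, m - 1⟩)]
  exact adj_cycleMap_iff h _ m _

end SimpleGraph

open SimpleGraph

theorem phiCond_of_embedding {V V' : Type} {G : SimpleGraph V} {G' : SimpleGraph V'}
    (f : G' ↪g G) (hf : ∀ u v, G.Adj (f u) v → ∃ w, f w = v) (h : phiCond G') : phiCond G := by
  obtain ⟨x, y, hxy, hx⟩ := h
  refine ⟨f x, f y, f.map_adj_iff.2 hxy, fun z hzx hz => ?_⟩
  obtain ⟨z, rfl⟩ : ∃ z', f z' = z := by
    rcases hz with hz | ⟨w, hxw, hwz⟩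
    · exact hf _ _ hz
    · obtain ⟨w, rfl⟩ := hf _ _ hxw
      exact hf _ _ hwz
  have hz' : G'.Adj x z ∨ ∃ w, G'.Adj x w ∧ G'.Adj w z := by
    rcases hz with hz | ⟨w, hxw, hwz⟩
    · exact .inl (f.map_adj_iff.1 hz)
    · obtain ⟨w, rfl⟩ := hf _ _ hxw
      exact .inr ⟨w, f.map_adj_iff.1 hxw, f.map_adj_iff.1 hwz⟩
  obtain ⟨hxz, u, v, huv, hux, hvx, hzu, hzv, hnb⟩ := hx z (ne_of_apply_ne f hzx) hz'
  refine ⟨f.map_adj_iff.2 hxz, f u, f v, f.injective.ne huv, f.injective.ne hux,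
    f.injective.ne hvx, f.map_adj_iff.2 hzu, f.map_adj_iff.2 hzv, fun w hzw => ?_⟩
  obtain ⟨w, rfl⟩ := hf _ _ hzw
  rcases hnb w (f.map_adj_iff.1 hzw) with rfl | rfl | rfl <;> simp

theorem phiCond_cone {V : Type} [Nonempty V] {H : SimpleGraph V}
    (hH : ∀ v, (H.neighborSet v).ncard = 2) : phiCond H.cone := by
  refine ⟨none, some (Classical.arbitrary V), trivial, ?_⟩
  rintro (_ | z) hz -
  · exact absurd rfl hz
  obtain ⟨u, v, huv, hzuv⟩ := Set.ncard_eq_two.1 (hH z)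
  have hadj w : H.Adj z w ↔ w = u ∨ w = v := by
    rw [← mem_neighborSet, hzuv, Set.mem_insert_iff, Set.mem_singleton_iff]
  refine ⟨trivial, some u, some v, by simpa, by simp, by simp, (hadj u).2 (.inl rfl),
    (hadj v).2 (.inr rfl), ?_⟩
  rintro (_ | w) hw
  · exact .inr (.inr rfl)
  · rcases (hadj w).1 hw with rfl | rfl <;> simp

theorem exists_apex_of_phiCond {V : Type} {G : SimpleGraph V} (h : phiCond G) :
    ∃ x, (G.neighborSet x).Nonempty ∧
      (∀ u ∈ insert x (G.neighborSet x), ∀ v, v ∉ insert x (G.neighborSet x) → ¬ G.Adj u v) ∧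
      ∀ v, ((G.induce (G.neighborSet x)).neighborSet v).ncard = 2 := by
  obtain ⟨x, y, hxy, hx⟩ := h
  have mem_of_adj z (hz : G.Adj x z) u (hzu : G.Adj z u) (hux : u ≠ x) : G.Adj x u :=
    (hx u hux (.inr ⟨z, hz, hzu⟩)).1
  refine ⟨x, ⟨y, hxy⟩, ?_, ?_⟩
  · rintro u (rfl | hu) v hv huv <;>
      simp only [Set.mem_insert_iff, mem_neighborSet, not_or] at hv
    · exact hv.2 huv
    · exact hv.2 (mem_of_adj u hu v huv hv.1)
  · rintro ⟨z, hz⟩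
    obtain ⟨-, u, v, huv, hux, hvx, hzu, hzv, hnb⟩ := hx z (G.ne_of_adj hz).symm (.inl hz)
    refine Set.ncard_eq_two.2 ⟨⟨u, mem_of_adj z hz u hzu hux⟩, ⟨v, mem_of_adj z hz v hzv hvx⟩,
      ne_of_apply_ne Subtype.val huv, ?_⟩
    ext ⟨w, hw⟩
    simp only [mem_neighborSet, comap_adj, Function.Embedding.coe_subtype, Set.mem_insert_iff,
      Set.mem_singleton_iff, Subtype.ext_iff]
    refine ⟨fun hzw => ?_, by rintro (rfl | rfl) <;> assumption⟩
    rcases hnb w hzw with rfl | rfl | rfl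
    exacts [.inl rfl, .inr rfl, absurd hw (G.loopless.irrefl _)]

/-- A finite graph `G` satisfies `φ` if, and only if, `G` contains a
bouquet of cycles as a free induced subgraph (i.e. an induced subgraph with no edges to
the rest of `G`, isomorphic to a bouquet of cycles). -/
theorem phi_iff_free_induced_bouquet {V : Type} [Fintype V] (G : SimpleGraph V) :
    phiCond G ↔
      ∃ (k : ℕ) (len : Fin k → ℕ), 1 ≤ k ∧ (∀ i, 3 ≤ len i) ∧
        ∃ S : Set V, (∀ u ∈ S, ∀ v, v ∉ S → ¬ G.Adj u v) ∧
          Nonempty (G.induce S ≃g bouquet k len) := by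
  constructor
  · intro h
    obtain ⟨x, ⟨y, hy⟩, hfree, hreg⟩ := exists_apex_of_phiCond h
    obtain ⟨k, len, hlen, ⟨e⟩⟩ := exists_iso_cycleUnion hreg
    obtain ⟨c⟩ := nonempty_iso_cone_induce_neighborSet G x
    refine ⟨k, len, Fin.pos (e.symm ⟨y, hy⟩).1, hlen, _, hfree, ⟨?_⟩⟩
    rw [bouquet_eq_cone]
    exact c.symm.trans e.symm.cone
  · rintro ⟨k, len, hk, hlen, S, hfree, ⟨e⟩⟩
    have : Nonempty (Σ i : Fin k, ZMod (len i)) := ⟨⟨⟨0, hk⟩, 0⟩⟩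
    refine phiCond_of_embedding (e.symm.toEmbedding.trans (Embedding.induce S))
      (fun u v huv => ?_) (bouquet_eq_cone k len ▸ phiCond_cone (ncard_neighborSet_cycleUnion hlen))
    have hv : v ∈ S := by_contra fun hv => hfree _ (e.symm u).2 v hv huv
    exact ⟨e ⟨v, hv⟩, by simp⟩
end

section
/- Let C be the closure of the class of odd wheels {W_{2n+1} : n ≥ 1} under taking subgraphs and disjoint unions. The sentence φ defining the presence of a free induced bouquet of cycles is preserved under homomorphisms over C: if G, H ∈ C, G ⊨ φ, and there is a homomorphism G → H, then H ⊨ φ. -/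
/-- The disjoint union of the wheels `W (ns i)` for `i : Fin k`. -/
def wheelSum (k : ℕ) (ns : Fin k → ℕ) :
    SimpleGraph (Σ i : Fin k, Fin (ns i) ⊕ Unit) :=
  SimpleGraph.fromRel (fun u v => ∃ h : u.1 = v.1, (wheel (ns v.1)).Adj (h ▸ u.2) v.2)

/-- Membership in the closure `C` of the odd wheels `{W (2n+1) : n ≥ 1}` under taking
subgraphs and disjoint unions: `G ∈ C` iff `G` is (isomorphic to) a subgraph of a finite
disjoint union of odd wheels. -/
def InC {V : Type} (G : SimpleGraph V) : Prop :=
  ∃ (k : ℕ) (ns : Fin k → ℕ), (∀ i, 3 ≤ ns i ∧ Odd (ns i)) ∧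
    ∃ f : V → Σ i : Fin k, Fin (ns i) ⊕ Unit, Function.Injective f ∧
      ∀ u v, G.Adj u v → (wheelSum k ns).Adj (f u) (f v)

/-! Let `x` witness `φ` in `G`; then every edge at `x` lies in two triangles through `x`. If `x`
sits at the apex of a wheel `W_n` of the union containing `G`, these triangles lead all the way
around the rim, so `x` and its neighbours carry a homomorphic image of `W_n`; if `x` sits on a rim,
its neighbourhood has at most three vertices and `x` lies in a `K₄ = W₃`. Either way an odd wheel
maps to `G`, hence to `H`, hence into one odd wheel `W_m` of the union containing `H`.

Such a map hits every edge of `W_m`. If the apex goes to the apex, the rim of the source becomes a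
closed walk of odd length on the `m`-cycle, which must cross every rim edge: otherwise the distance
to the missing edge would change by exactly one at each step. If the apex goes to a rim vertex, the
same parity count shows that its neighbourhood contains a triangle, so `m = 3`, and a symmetry of
`K₄` returns us to the first case. The copy of `W_m` found in `H` then satisfies `φ` at its
apex. -/

open Sum SimpleGraph
open scoped Fin.NatCast

theorem ne_of_odd_of_forall_eq_add_one_or_sub_one {d : ℕ → ℤ}
    (hd : ∀ t, d (t + 1) = d t + 1 ∨ d (t + 1) = d t - 1) {n : ℕ} (hn : Odd n) : d n ≠ d 0 := by
  have hpar : ∀ t, (d t - d 0 + t) % 2 = 0 := by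
    intro t
    induction t with
    | zero => simp
    | succ s ih => rcases hd s with h | h <;> omega
  obtain ⟨c, rfl⟩ := hn
  have := hpar (2 * c + 1)
  omega

theorem Fin.exists_sym2_eq_of_odd {m : ℕ} [NeZero m] {p : ℕ → Fin m}
    (hp : ∀ t, p (t + 1) = p t + 1 ∨ p (t + 1) = p t - 1) {n : ℕ} (hn : Odd n) (hpn : p n = p 0)
    (j : Fin m) : ∃ t, s(p t, p (t + 1)) = s(j, j + 1) := by
  obtain ⟨m, rfl⟩ : ∃ m', m = m' + 1 := ⟨m - 1, by have := NeZero.pos m; omega⟩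
  by_contra! hj
  -- if the edge `{j, j + 1}` is never crossed, the distance from `j + 1` moves by one at each step
  refine ne_of_odd_of_forall_eq_add_one_or_sub_one
    (d := fun t => ((p t - (j + 1) : Fin (m + 1)) : ℤ)) (fun t => ?_) hn (by simp only [hpn])
  rcases hp t with h | h
  · have hx : p t - (j + 1) ≠ Fin.last m := fun hx => hj t <| by
      have hpt : p t = j := by
        rw [← sub_add_cancel (p t) (j + 1), hx, add_comm j, ← add_assoc, Fin.last_add_one,
          zero_add]
      rw [h, hpt]
    left
    simp [h, add_sub_right_comm, Fin.val_add_one, hx]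
  · have hx : p t - (j + 1) ≠ 0 := fun hx => hj t <| by
      rw [h, sub_eq_zero.1 hx, add_sub_cancel_right, Sym2.eq_swap]
    right
    have : p (t + 1) - (j + 1) = p t - (j + 1) - 1 := by rw [h, sub_right_comm]
    simp only [this, Fin.coe_sub_one, hx, if_false]
    have := Fin.pos_iff_ne_zero.2 hx
    omega

open scoped Fin.CommRing in
theorem Fin.add_one_ne_sub_one {m : ℕ} [NeZero m] (hm : 3 ≤ m) (j : Fin m) : j + 1 ≠ j - 1 := by
  intro h
  have h2 : ((2 : ℕ) : Fin m) = 0 := by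
    push_cast
    linear_combination h
  have := Nat.le_of_dvd two_pos (Fin.natCast_eq_zero.1 h2)
  omega

theorem eq_or_eq_or_eq_of_ne {α : Type*} {a b c A B C x : α} (hab : a ≠ b) (hac : a ≠ c)
    (hbc : b ≠ c) (ha : a = A ∨ a = B ∨ a = C) (hb : b = A ∨ b = B ∨ b = C)
    (hc : c = A ∨ c = B ∨ c = C) (hx : x = A ∨ x = B ∨ x = C) : x = a ∨ x = b ∨ x = c := by
  classical
  have : ({A, B, C} : Finset α) ⊆ {a, b, c} :=
    (Finset.eq_of_subset_of_card_le (by simp [Finset.insert_subset_iff, ha, hb, hc])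
      (by rw [Finset.card_eq_three.2 ⟨a, b, c, hab, hac, hbc, rfl⟩]; exact Finset.card_le_three)).ge
  simpa using this (by simpa using hx)

section Wheel

variable {m : ℕ}

@[simp] theorem wheel_adj_inl_inr (i : Fin m) (u : Unit) : (wheel m).Adj (inl i) (inr u) := by
  simp [wheel]

@[simp] theorem wheel_adj_inr_inl (u : Unit) (i : Fin m) : (wheel m).Adj (inr u) (inl i) :=
  (wheel_adj_inl_inr i u).symm

@[simp] theorem wheel_not_adj_inr_inr (u v : Unit) : ¬ (wheel m).Adj (inr u) (inr v) := by
  simp [wheel]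

theorem wheel_adj_inr_iff {u : Unit} {b : Fin m ⊕ Unit} :
    (wheel m).Adj (inr u) b ↔ ∃ j, b = inl j := by
  rcases b with j | v <;> simp

theorem wheel_adj_inl_inl_iff [NeZero m] {i j : Fin m} :
    (wheel m).Adj (inl i) (inl j) ↔ i ≠ j ∧ (j = i + 1 ∨ i = j + 1) := by
  simp [wheel, Fin.ext_iff, Fin.val_add, Nat.add_mod_mod, eq_comm]

theorem wheel_adj_inl_add_one [NeZero m] (hm : 2 ≤ m) (i : Fin m) :
    (wheel m).Adj (inl i) (inl (i + 1)) :=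
  wheel_adj_inl_inl_iff.2 ⟨by simpa using show m ≠ 1 by omega, .inl rfl⟩

theorem wheel_adj_inl_iff [NeZero m] (hm : 2 ≤ m) {i : Fin m} {b : Fin m ⊕ Unit} :
    (wheel m).Adj (inl i) b ↔ b = inr () ∨ b = inl (i + 1) ∨ b = inl (i - 1) := by
  rcases b with j | ⟨⟩
  · simp only [wheel_adj_inl_inl_iff, inl.injEq, reduceCtorEq, false_or, eq_sub_iff_add_eq,
      eq_comm (a := i)]
    constructor
    · exact fun h => h.2
    · rintro (rfl | rfl) <;> simpa using show m ≠ 1 by omega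
  · simp

theorem eq_three_of_wheel_adj {i j l : Fin m} (hij : (wheel m).Adj (inl i) (inl j))
    (hjl : (wheel m).Adj (inl j) (inl l)) (hli : (wheel m).Adj (inl l) (inl i)) : m = 3 := by
  have hmod : ∀ a : Fin m, (a.val + 1) % m = if a.val + 1 = m then 0 else a.val + 1 := by
    intro a
    split_ifs with h
    · rw [h, Nat.mod_self]
    · exact Nat.mod_eq_of_lt (by omega)
  simp only [wheel, fromRel_adj, ne_eq, inl.injEq, Fin.ext_iff, hmod] at hij hjl hli
  split_ifs at hij hjl hli <;> omega

theorem wheel_three_adj {a b : Fin 3 ⊕ Unit} : (wheel 3).Adj a b ↔ a ≠ b := by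
  rcases a with i | _ <;> rcases b with j | _
  · simp only [wheel, fromRel_adj, ne_eq, inl.injEq, and_iff_left_iff_imp]
    omega
  all_goals simp [wheel]

theorem wheel_le_of_forall_adj [NeZero m] {K : SimpleGraph (Fin m ⊕ Unit)}
    (hspoke : ∀ j, K.Adj (inl j) (inr ())) (hrim : ∀ j, K.Adj (inl j) (inl (j + 1))) :
    wheel m ≤ K := by
  rintro (i | ⟨⟩) (j | ⟨⟩) h
  · obtain ⟨-, rfl | rfl⟩ := wheel_adj_inl_inl_iff.1 h
    exacts [hrim i, (hrim j).symm]
  · exact hspoke i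
  · exact (hspoke j).symm
  · exact absurd h (wheel_not_adj_inr_inr _ _)

theorem nonempty_wheel_hom_of_forall_adj {V : Type} {G : SimpleGraph V} {m : ℕ} [NeZero m]
    (σ : Fin m → V) (x : V) (hspoke : ∀ j, G.Adj (σ j) x) (hrim : ∀ j, G.Adj (σ j) (σ (j + 1))) :
    Nonempty (wheel m →g G) :=
  ⟨⟨Sum.elim σ fun _ => x, fun hab => wheel_le_of_forall_adj (K := G.comap (Sum.elim σ fun _ => x))
    hspoke hrim hab⟩⟩

end Wheel

section WheelHom

variable {n m : ℕ}

theorem wheel_adj_inl_natCast_succ [NeZero n] (hn : 2 ≤ n) (t : ℕ) :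
    (wheel n).Adj (inl (t : Fin n)) (inl ((t + 1 : ℕ) : Fin n)) := by
  rw [Nat.cast_succ]
  exact wheel_adj_inl_add_one hn _

theorem wheel_le_of_hom_of_map_inr (hn : 3 ≤ n) (hno : Odd n) (h : wheel n →g wheel m)
    (hc : h (inr ()) = inr ()) {K : SimpleGraph (Fin m ⊕ Unit)}
    (hK : ∀ ⦃a b⦄, (wheel n).Adj a b → K.Adj (h a) (h b)) : wheel m ≤ K := by
  have : NeZero n := ⟨by omega⟩
  have hrim : ∀ a : Fin n, ∃ j, h (inl a) = inl j := fun a =>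
    wheel_adj_inr_iff.1 (hc ▸ h.map_adj (wheel_adj_inr_inl () a))
  choose p hp using hrim
  have : NeZero m := ⟨(p 0).pos.ne'⟩
  let q : ℕ → Fin m := fun t => p t
  have hadj := wheel_adj_inl_natCast_succ (n := n) (by omega)
  have hstep : ∀ t, q (t + 1) = q t + 1 ∨ q (t + 1) = q t - 1 := by
    intro t
    have := h.map_adj (hadj t)
    rw [hp, hp, wheel_adj_inl_inl_iff] at this
    rcases this.2 with h' | h'
    exacts [.inl h', .inr (eq_sub_of_add_eq h'.symm)]
  have hspoke : ∀ t, K.Adj (inl (q t)) (inr ()) := fun t => by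
    simpa only [hp, hc] using hK (wheel_adj_inl_inr (t : Fin n) ())
  have hrim : ∀ t, K.Adj (inl (q t)) (inl (q (t + 1))) := fun t => by
    simpa only [hp] using hK (hadj t)
  have hcov := Fin.exists_sym2_eq_of_odd hstep hno (by simp [q])
  refine wheel_le_of_forall_adj (fun j => ?_) (fun j => ?_)
  · obtain ⟨t, ht⟩ := hcov j
    rcases Sym2.eq_iff.1 ht with ⟨rfl, -⟩ | ⟨-, rfl⟩
    exacts [hspoke t, hspoke (t + 1)]
  · obtain ⟨t, ht⟩ := hcov j
    rcases Sym2.eq_iff.1 ht with ⟨rfl, h⟩ | ⟨h, rfl⟩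
    exacts [h ▸ hrim t, h ▸ (hrim t).symm]

theorem eq_three_of_hom_map_inr_eq_inl (hn : 3 ≤ n) (hno : Odd n) (h : wheel n →g wheel m)
    {r : Fin m} (hr : h (inr ()) = inl r) : m = 3 := by
  have : NeZero n := ⟨by omega⟩
  by_contra hm3
  -- for `m ≠ 3` the neighbourhood of `inl r` has no rim edge, so the walk alternates with the apex
  let q : ℕ → Fin m ⊕ Unit := fun t => h (inl (t : Fin n))
  refine ne_of_odd_of_forall_eq_add_one_or_sub_one
    (d := fun t => if q t = inr () then 0 else 1) (fun t => ?_) hno (by simp [q])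
  have hq : (wheel m).Adj (q t) (q (t + 1)) := h.map_adj (wheel_adj_inl_natCast_succ (by omega) t)
  have hrq : ∀ t, (wheel m).Adj (inl r) (q t) := fun t => hr ▸ h.map_adj (wheel_adj_inr_inl _ _)
  have hr0 := hrq t
  have hr1 := hrq (t + 1)
  rcases hq0 : q t with a | ⟨⟩ <;> rcases hq1 : q (t + 1) with b | ⟨⟩ <;>
    simp only [hq0, hq1, reduceCtorEq, ↓reduceIte] at hq hr0 hr1 ⊢
  · exact (hm3 (eq_three_of_wheel_adj hr0 hq hr1.symm)).elim
  · simp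
  · simp
  · exact (wheel_not_adj_inr_inr _ _ hq).elim

theorem wheel_le_of_hom (hn : 3 ≤ n) (hno : Odd n) (h : wheel n →g wheel m)
    {K : SimpleGraph (Fin m ⊕ Unit)} (hK : ∀ ⦃a b⦄, (wheel n).Adj a b → K.Adj (h a) (h b)) :
    wheel m ≤ K := by
  rcases hc : h (inr ()) with r | ⟨⟩
  · obtain rfl := eq_three_of_hom_map_inr_eq_inl hn hno h hc
    -- `W₃ = K₄`, so swapping `inl r` with the apex is an automorphism
    let σ : wheel 3 ≃g wheel 3 := ⟨Equiv.swap (inl r) (inr ()), by simp [wheel_three_adj]⟩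
    have := wheel_le_of_hom_of_map_inr hn hno (σ.toHom.comp h) (K := K.comap σ.symm)
      (by simp [σ, hc]) (fun a b hab => by simpa using hK hab)
    intro u v huv
    simpa using this (σ.map_adj_iff.2 huv)
  · exact wheel_le_of_hom_of_map_inr hn hno h hc hK

end WheelHom

section WheelSum

variable {k : ℕ} {ns : Fin k → ℕ}

theorem wheelSum_adj_mk_iff {i : Fin k} {a : Fin (ns i) ⊕ Unit}
    {v : Σ i : Fin k, Fin (ns i) ⊕ Unit} :
    (wheelSum k ns).Adj ⟨i, a⟩ v ↔ ∃ b, v = ⟨i, b⟩ ∧ (wheel (ns i)).Adj a b := by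
  rcases v with ⟨j, b⟩
  simp only [wheelSum, fromRel_adj]
  constructor
  · rintro ⟨-, ⟨rfl, h⟩ | ⟨rfl, h⟩⟩
    exacts [⟨b, rfl, h⟩, ⟨b, rfl, h.symm⟩]
  · rintro ⟨b, ⟨⟩, hab⟩
    exact ⟨by simpa using hab.ne, .inl ⟨rfl, hab⟩⟩

theorem exists_wheel_hom_of_wheelSum_hom {n : ℕ} (g : wheel n →g wheelSum k ns) :
    ∃ i, ∃ h : wheel n →g wheel (ns i), ∀ a, g a = ⟨i, h a⟩ := by
  have hcomp : ∀ a, ∃ b, g a = ⟨(g (inr ())).1, b⟩ := by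
    rintro (j | ⟨⟩)
    · obtain ⟨b, hb, -⟩ := wheelSum_adj_mk_iff.1 (g.map_adj (wheel_adj_inr_inl () j))
      exact ⟨b, hb⟩
    · exact ⟨_, rfl⟩
  choose h hh using hcomp
  refine ⟨_, ⟨h, fun {a b} hab => ?_⟩, hh⟩
  have := g.map_adj hab
  rw [hh a, wheelSum_adj_mk_iff] at this
  obtain ⟨c, hc, hac⟩ := this
  rw [hh b, Sigma.mk.inj_iff, heq_eq_eq] at hc
  exact hc.2 ▸ hac

theorem phiCond_of_le_wheelSum {H : SimpleGraph (Σ i : Fin k, Fin (ns i) ⊕ Unit)}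
    (hH : H ≤ wheelSum k ns) {i : Fin k} (hm : 3 ≤ ns i)
    (hfull : wheel (ns i) ≤ H.comap (Sigma.mk i)) : phiCond H := by
  have : NeZero (ns i) := ⟨by omega⟩
  have hfull' : ∀ {a b}, (wheel (ns i)).Adj a b → H.Adj ⟨i, a⟩ ⟨i, b⟩ := fun h => hfull h
  refine ⟨⟨i, inr ()⟩, ⟨i, inl 0⟩, hfull' (wheel_adj_inr_inl () 0), fun z hzx hz => ?_⟩
  obtain ⟨j, rfl⟩ : ∃ j, z = ⟨i, inl j⟩ := by
    rcases hz with hz | ⟨w, hw, hwz⟩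
    · obtain ⟨b, rfl, hb⟩ := wheelSum_adj_mk_iff.1 (hH hz)
      obtain ⟨j, rfl⟩ := wheel_adj_inr_iff.1 hb
      exact ⟨j, rfl⟩
    · obtain ⟨b, rfl, hb⟩ := wheelSum_adj_mk_iff.1 (hH hw)
      obtain ⟨j, rfl⟩ := wheel_adj_inr_iff.1 hb
      obtain ⟨c, rfl, hc⟩ := wheelSum_adj_mk_iff.1 (hH hwz)
      rcases (wheel_adj_inl_iff (by omega)).1 hc with rfl | rfl | rfl
      exacts [absurd rfl hzx, ⟨_, rfl⟩, ⟨_, rfl⟩]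
  refine ⟨hfull' (wheel_adj_inr_inl () j), ⟨i, inl (j + 1)⟩, ⟨i, inl (j - 1)⟩,
    by simpa using Fin.add_one_ne_sub_one hm j, by simp, by simp,
    hfull' ((wheel_adj_inl_iff (by omega)).2 (by simp)),
    hfull' ((wheel_adj_inl_iff (by omega)).2 (by simp)), fun w hw => ?_⟩
  obtain ⟨b, rfl, hb⟩ := wheelSum_adj_mk_iff.1 (hH hw)
  rcases (wheel_adj_inl_iff (by omega)).1 hb with rfl | rfl | rfl <;> simp

end WheelSum

theorem phiCond_of_map {V W : Type} {G : SimpleGraph V} (f : V ↪ W) (h : phiCond (G.map f)) :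
    phiCond G := by
  have hnbr : ∀ {a u}, (G.map f).Adj (f a) u → ∃ b, u = f b ∧ G.Adj a b := fun h => by
    obtain ⟨a', b, hab, ha, rfl⟩ := (map_adj f G _ _).1 h
    exact ⟨b, rfl, f.injective ha ▸ hab⟩
  obtain ⟨_, _, hfxy, hx⟩ := h
  obtain ⟨x, y, hxy, rfl, rfl⟩ := (map_adj f G _ _).1 hfxy
  refine ⟨x, y, hxy, fun z hzx hz => ?_⟩
  have hz' : (G.map f).Adj (f x) (f z) ∨ ∃ w, (G.map f).Adj (f x) w ∧ (G.map f).Adj w (f z) := by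
    rcases hz with hz | ⟨w, hxw, hwz⟩
    exacts [.inl (map_adj_apply.2 hz),
      .inr ⟨f w, map_adj_apply.2 hxw, map_adj_apply.2 hwz⟩]
  obtain ⟨hxz, _, _, huv, hux, hvx, hfzu, hfzv, hzw⟩ := hx (f z) (f.injective.ne hzx) hz'
  obtain ⟨u, rfl, hzu⟩ := hnbr hfzu
  obtain ⟨v, rfl, hzv⟩ := hnbr hfzv
  refine ⟨map_adj_apply.1 hxz, u, v, ne_of_apply_ne f huv, ne_of_apply_ne f hux,
    ne_of_apply_ne f hvx, hzu, hzv, fun w hw => ?_⟩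
  simpa using hzw (f w) (map_adj_apply.2 hw)

section Embedding

variable {V : Type} {G : SimpleGraph V} {k : ℕ} {ns : Fin k → ℕ}
  {e : V → Σ i : Fin k, Fin (ns i) ⊕ Unit}

theorem nonempty_wheel_hom_of_map_eq_inr (einj : Function.Injective e)
    (he : ∀ u v, G.Adj u v → (wheelSum k ns).Adj (e u) (e v)) {x y : V} {i : Fin k}
    (hex : e x = ⟨i, inr ()⟩) (hxy : G.Adj x y)
    (htri : ∀ z, G.Adj x z → ∃ u v, u ≠ v ∧ G.Adj x u ∧ G.Adj x v ∧ G.Adj z u ∧ G.Adj z v) :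
    Nonempty (wheel (ns i) →g G) := by
  have hN : ∀ z, G.Adj x z → ∃ j, e z = ⟨i, inl j⟩ := fun z hz => by
    obtain ⟨b, hb, hib⟩ := wheelSum_adj_mk_iff.1 (hex ▸ he x z hz)
    obtain ⟨j, rfl⟩ := wheel_adj_inr_iff.1 hib
    exact ⟨j, hb⟩
  obtain ⟨j₀, hj₀⟩ := hN y hxy
  have : NeZero (ns i) := ⟨j₀.pos.ne'⟩
  have hsucc : ∀ z j, G.Adj x z → e z = ⟨i, inl j⟩ →
      ∃ z', G.Adj x z' ∧ G.Adj z z' ∧ e z' = ⟨i, inl (j + 1)⟩ := by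
    intro z j hz hzj
    have hnbr : ∀ w, G.Adj x w → G.Adj z w →
        ∃ j', e w = ⟨i, inl j'⟩ ∧ (j' = j + 1 ∨ j = j' + 1) := by
      intro w hxw hzw
      obtain ⟨j', hj'⟩ := hN w hxw
      obtain ⟨b, hb, hjb⟩ := wheelSum_adj_mk_iff.1 (hzj ▸ hj' ▸ he z w hzw)
      cases hb
      exact ⟨j', hj', (wheel_adj_inl_inl_iff.1 hjb).2⟩
    obtain ⟨u, v, huv, hxu, hxv, hzu, hzv⟩ := htri z hz
    obtain ⟨ju, hu, rfl | hju⟩ := hnbr u hxu hzu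
    · exact ⟨u, hxu, hzu, hu⟩
    obtain ⟨jv, hv, rfl | hjv⟩ := hnbr v hxv hzv
    · exact ⟨v, hxv, hzv, hv⟩
    exact absurd (einj (by rw [hu, hv, add_right_cancel (hju.symm.trans hjv)])) huv
  have hall : ∀ t : ℕ, ∃ z, G.Adj x z ∧ e z = ⟨i, inl (j₀ + t)⟩ := by
    intro t
    induction t with
    | zero => exact ⟨y, hxy, by simpa using hj₀⟩
    | succ t ih =>
      obtain ⟨z, hz, hzj⟩ := ih
      obtain ⟨z', hz', -, hz'j⟩ := hsucc z _ hz hzj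
      exact ⟨z', hz', by rw [hz'j, Nat.cast_succ, add_assoc]⟩
  choose σ hxσ hσ using fun j : Fin (ns i) =>
    (by simpa using hall (j - j₀).val : ∃ z, G.Adj x z ∧ e z = ⟨i, inl j⟩)
  refine nonempty_wheel_hom_of_forall_adj σ x (fun j => (hxσ j).symm) fun j => ?_
  obtain ⟨z', -, hz', hz'j⟩ := hsucc _ _ (hxσ j) (hσ j)
  exact einj (hz'j.trans (hσ _).symm) ▸ hz'

theorem nonempty_wheel_three_hom_of_map_eq_inl (einj : Function.Injective e)
    (he : ∀ u v, G.Adj u v → (wheelSum k ns).Adj (e u) (e v)) {x y : V} {i : Fin k}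
    {r : Fin (ns i)} (hm : 3 ≤ ns i) (hex : e x = ⟨i, inl r⟩) (hxy : G.Adj x y)
    (htri : ∀ z, G.Adj x z → ∃ u v, u ≠ v ∧ G.Adj x u ∧ G.Adj x v ∧ G.Adj z u ∧ G.Adj z v) :
    Nonempty (wheel 3 →g G) := by
  have : NeZero (ns i) := ⟨by omega⟩
  have hN : ∀ w, G.Adj x w →
      e w = ⟨i, inr ()⟩ ∨ e w = ⟨i, inl (r + 1)⟩ ∨ e w = ⟨i, inl (r - 1)⟩ := fun w hw => by
    obtain ⟨b, hb, hrb⟩ := wheelSum_adj_mk_iff.1 (hex ▸ he x w hw)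
    rcases (wheel_adj_inl_iff (by omega)).1 hrb with rfl | rfl | rfl
    exacts [.inl hb, .inr (.inl hb), .inr (.inr hb)]
  obtain ⟨u, v, huv, hxu, hxv, hyu, hyv⟩ := htri y hxy
  have hN3 : ∀ w, G.Adj x w → w = y ∨ w = u ∨ w = v := fun w hw => by
    simpa only [einj.eq_iff] using eq_or_eq_or_eq_of_ne (einj.ne hyu.ne) (einj.ne hyv.ne)
      (einj.ne huv) (hN y hxy) (hN u hxu) (hN v hxv) (hN w hw)
  obtain ⟨u₁, u₂, hu₁₂, hxu₁, hxu₂, huu₁, huu₂⟩ := htri u hxu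
  have huv' : G.Adj u v := by
    rcases hN3 u₁ hxu₁ with rfl | rfl | rfl <;> rcases hN3 u₂ hxu₂ with rfl | rfl | rfl <;>
      simp_all
  refine nonempty_wheel_hom_of_forall_adj ![y, u, v] x (fun j => ?_) (fun j => ?_) <;>
    fin_cases j <;> simp [hxy.symm, hxu.symm, hxv.symm, hyu, huv', hyv.symm]

end Embedding

theorem exists_wheel_hom_of_phiCond {V : Type} {G : SimpleGraph V} (hG : InC G)
    (hφ : phiCond G) : ∃ n, 3 ≤ n ∧ Odd n ∧ Nonempty (wheel n →g G) := by
  obtain ⟨k, ns, hns, e, einj, he⟩ := hG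
  obtain ⟨x, y, hxy, hx⟩ := hφ
  have htri : ∀ z, G.Adj x z → ∃ u v, u ≠ v ∧ G.Adj x u ∧ G.Adj x v ∧ G.Adj z u ∧ G.Adj z v := by
    intro z hz
    obtain ⟨-, u, v, huv, hux, hvx, hzu, hzv, -⟩ := hx z hz.ne' (.inl hz)
    exact ⟨u, v, huv, (hx u hux (.inr ⟨z, hz, hzu⟩)).1, (hx v hvx (.inr ⟨z, hz, hzv⟩)).1, hzu, hzv⟩
  rcases hex : e x with ⟨i, r | ⟨⟩⟩
  · exact ⟨3, le_rfl, by decide,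
      nonempty_wheel_three_hom_of_map_eq_inl einj he (hns i).1 hex hxy htri⟩
  · exact ⟨ns i, (hns i).1, (hns i).2, nonempty_wheel_hom_of_map_eq_inr einj he hex hxy htri⟩

theorem phiCond_of_wheel_hom {W : Type} {H : SimpleGraph W} (hH : InC H) {n : ℕ} (hn : 3 ≤ n)
    (hno : Odd n) (g : wheel n →g H) : phiCond H := by
  obtain ⟨k, ns, hns, e, einj, he⟩ := hH
  let e' : W ↪ Σ i : Fin k, Fin (ns i) ⊕ Unit := ⟨e, einj⟩
  have hle : H.map e' ≤ wheelSum k ns := fun _ _ hfuv => by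
    obtain ⟨u, v, huv, rfl, rfl⟩ := (map_adj e' H _ _).1 hfuv
    exact he u v huv
  obtain ⟨i, h, hh⟩ := exists_wheel_hom_of_wheelSum_hom ((⟨e, he _ _⟩ : H →g wheelSum k ns).comp g)
  refine phiCond_of_map e' (phiCond_of_le_wheelSum hle (hns i).1 ?_)
  refine wheel_le_of_hom hn hno h fun a b hab => ?_
  rw [comap_adj, ← hh, ← hh]
  exact map_adj_apply.2 (g.map_adj hab)

/-- The sentence `φ` is preserved under homomorphisms over the closure
`C` of the odd wheels under subgraphs and disjoint unions. -/
theorem phi_hom_preserved_over_C {V W : Type} (G : SimpleGraph V) (H : SimpleGraph W)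
    (hG : InC G) (hH : InC H) (f : G →g H) (hφ : phiCond G) : phiCond H := by
  obtain ⟨n, hn, hno, ⟨g⟩⟩ := exists_wheel_hom_of_phiCond hG hφ
  exact phiCond_of_wheel_hom hH hn hno (f.comp g)
end
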